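/- Let X be a finite type and {·} : X⁶ → ℝ a function satisfying the pentagon identity: for all a, b, c, d, e, i, j, k, l in X, Σ_{m ∈ X} {a i m; d e j} · {b c l; d m i} · {b l k; e a m} = {b c k; j a i} · {k c l; d e j}. Let E be a seven-element index set with distinguished distinct elements eₐ, e_b, e_c, e_d, e_e (boundary slots) and s₁, s₂ (diagonal slots), and let V be the free ℝ-vector space on colourings f : E → X. Define linear endomorphisms of V on basis colourings f by: F₁(f) = Σ_m {f(eₐ) f(s₁) m; f(e_d) f(e_e) f(s₂)} · f[s₂ ↦ m]; F₂(f) = Σ_l {f(e_b) f(e_c) l; f(e_d) f(s₂) f(s₁)} · f[s₁ ↦ l]; F₃(f) = Σ_k {f(e_b) f(s₁) k; f(e_e) f(eₐ) f(s₂)} · f[s₂ ↦ k]; G₁(f) = Σ_k {f(e_b) f(e_c) k; f(s₂) f(eₐ) f(s₁)} · f[s₁ ↦ k]; G₂(f) = Σ_l {f(s₁) f(e_c) l; f(e_d) f(e_e) f(s₂)} · f[s₂ ↦ l]; and let S be the linear map induced on colourings by swapping the values at s₁ and s₂. Then F₃ ∘ F₂ ∘ F₁ = S ∘ G₂ ∘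 G₁ as linear endomorphisms of V. -/
import Mathlib


/-- The flip operator `A(s; p, q, u, v)` on the free `ℝ`-vector space on colourings
`f : E → X`: it sends a basis colouring `f` to
`∑ x, {f(p) f(q) x; f(u) f(v) f(s)} • f[s ↦ x]`. -/
noncomputable def flipOp {X E : Type*} [Fintype X] [DecidableEq E]
    (sixj : X → X → X → X → X → X → ℝ) (s p q u v : E) :
    ((E → X) →₀ ℝ) →ₗ[ℝ] ((E → X) →₀ ℝ) :=
  Finsupp.lift ((E → X) →₀ ℝ) ℝ (E → X) fun f =>
    ∑ x : X, sixj (f p) (f q) x (f u) (f v) (f s) • Finsupp.single (Function.update f s x) 1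

/- Note: in terms of `flipOp`, the five operators of the statement are
  `F₁ = flipOp sixj s₂ eₐ s₁ e_d e_e`, i.e. `F₁ f = ∑ m, {f(eₐ) f(s₁) m; f(e_d) f(e_e) f(s₂)} • f[s₂ ↦ m]`;
  `F₂ = flipOp sixj s₁ e_b e_c e_d s₂`, i.e. `F₂ f = ∑ l, {f(e_b) f(e_c) l; f(e_d) f(s₂) f(s₁)} • f[s₁ ↦ l]`;
  `F₃ = flipOp sixj s₂ e_b s₁ e_e eₐ`, i.e. `F₃ f = ∑ k, {f(e_b) f(s₁) k; f(e_e) f(eₐ) f(s₂)} • f[s₂ ↦ k]`;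
  `G₁ = flipOp sixj s₁ e_b e_c s₂ eₐ`, i.e. `G₁ f = ∑ k, {f(e_b) f(e_c) k; f(s₂) f(eₐ) f(s₁)} • f[s₁ ↦ k]`;
  `G₂ = flipOp sixj s₂ s₁ e_c e_d e_e`, i.e. `G₂ f = ∑ l, {f(s₁) f(e_c) l; f(e_d) f(e_e) f(s₂)} • f[s₂ ↦ l]`;
and `S` is the map induced on colourings by swapping the values at `s₁` and `s₂`,
i.e. `Finsupp.lmapDomain ℝ ℝ (fun f => f ∘ Equiv.swap s₁ s₂)`. -/

lemma flipOp_single {X E : Type*} [Fintype X] [DecidableEq E]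
    (sixj : X → X → X → X → X → X → ℝ) (s p q u v : E) (f : E → X) :
    flipOp sixj s p q u v (Finsupp.single f 1) =
      ∑ x : X, sixj (f p) (f q) x (f u) (f v) (f s) • Finsupp.single (Function.update f s x) 1 := by
  simp [flipOp, Finsupp.lift_apply, Finsupp.sum_single_index]

theorem pentagon_relation_for_flips {X E : Type*} [Fintype X] [Fintype E] [DecidableEq E]
    (sixj : X → X → X → X → X → X → ℝ)
    (hpent : ∀ a b c d e i j k l : X,
      ∑ m : X, sixj a i m d e j * sixj b c l d m i * sixj b l k e a m =
        sixj b c k j a i * sixj k c l d e j)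
    (hcard : Fintype.card E = 7)
    (ea eb ec ed ee s₁ s₂ : E)
    (hdistinct : List.Pairwise (· ≠ ·) [ea, eb, ec, ed, ee, s₁, s₂]) :
    (flipOp sixj s₂ eb s₁ ee ea) ∘ₗ (flipOp sixj s₁ eb ec ed s₂) ∘ₗ
        (flipOp sixj s₂ ea s₁ ed ee) =
      (Finsupp.lmapDomain ℝ ℝ (fun f : E → X => f ∘ Equiv.swap s₁ s₂)) ∘ₗ
        (flipOp sixj s₂ s₁ ec ed ee) ∘ₗ (flipOp sixj s₁ eb ec s₂ ea) := by
  simp only [List.pairwise_cons, List.mem_cons, List.not_mem_nil, or_false,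
    forall_eq_or_imp, forall_eq] at hdistinct
  obtain ⟨⟨hab, hac, had, hae, ha1, ha2⟩, ⟨hbc, hbd, hbe, hb1, hb2⟩,
    ⟨hcd, hce, hc1, hc2⟩, ⟨hde, hd1, hd2⟩, ⟨he1, he2⟩, h12, -⟩ := hdistinct
  have key : ∀ f : E → X,
      ((flipOp sixj s₂ eb s₁ ee ea) ∘ₗ (flipOp sixj s₁ eb ec ed s₂) ∘ₗ
        (flipOp sixj s₂ ea s₁ ed ee)) (Finsupp.single f 1) =
      ((Finsupp.lmapDomain ℝ ℝ (fun f : E → X => f ∘ Equiv.swap s₁ s₂)) ∘ₗ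
        (flipOp sixj s₂ s₁ ec ed ee) ∘ₗ (flipOp sixj s₁ eb ec s₂ ea)) (Finsupp.single f 1) := by
    intro f
    set a := f ea with ha; set b := f eb with hb; set c := f ec with hc
    set d := f ed with hd; set e := f ee with he
    set i := f s₁ with hi; set j := f s₂ with hj
    have hcollapse : ∀ m l k : X,
        Function.update (Function.update (Function.update f s₂ m) s₁ l) s₂ k =
          Function.update (Function.update f s₁ l) s₂ k := by
      intro m l k
      rw [Function.update_comm h12.symm, Function.update_idem]
    have hswap : ∀ k l : X,
        (Function.update (Function.update f s₁ k) s₂ l) ∘ (Equiv.swap s₁ s₂) =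
          Function.update (Function.update f s₁ l) s₂ k := by
      intro k l; funext t
      rcases eq_or_ne t s₁ with rfl | ht1
      · simp [Equiv.swap_apply_left, Function.update_apply, h12, h12.symm]
      rcases eq_or_ne t s₂ with rfl | ht2
      · simp [Equiv.swap_apply_right, Function.update_apply, h12, h12.symm]
      · simp [Equiv.swap_apply_of_ne_of_ne ht1 ht2, Function.update_apply, ht1, ht2]
    have hLHS : ((flipOp sixj s₂ eb s₁ ee ea) ∘ₗ (flipOp sixj s₁ eb ec ed s₂) ∘ₗ
        (flipOp sixj s₂ ea s₁ ed ee)) (Finsupp.single f 1) =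
        ∑ m : X, ∑ l : X, ∑ k : X,
          (sixj a i m d e j * sixj b c l d m i * sixj b l k e a m) •
            Finsupp.single (Function.update (Function.update f s₁ l) s₂ k) (1:ℝ) := by
      simp only [LinearMap.comp_apply, flipOp_single, map_sum, map_smul, Finset.smul_sum,
        smul_smul, Function.update_self,
        Function.update_of_ne ha1, Function.update_of_ne ha2,
        Function.update_of_ne hb1, Function.update_of_ne hb2,
        Function.update_of_ne hc2, Function.update_of_ne hd2,
        Function.update_of_ne he1, Function.update_of_ne he2,
        Function.update_of_ne h12, Function.update_of_ne h12.symm,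
        hcollapse, ← ha, ← hb, ← hc, ← hd, ← he, ← hi, ← hj]
    have hRHS : ((Finsupp.lmapDomain ℝ ℝ (fun f : E → X => f ∘ Equiv.swap s₁ s₂)) ∘ₗ
        (flipOp sixj s₂ s₁ ec ed ee) ∘ₗ (flipOp sixj s₁ eb ec s₂ ea)) (Finsupp.single f 1) =
        ∑ k : X, ∑ l : X,
          (sixj b c k j a i * sixj k c l d e j) •
            Finsupp.single (Function.update (Function.update f s₁ l) s₂ k) (1:ℝ) := by
      simp only [LinearMap.comp_apply, flipOp_single, map_sum, map_smul, Finset.smul_sum,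
        smul_smul, Function.update_self,
        Function.update_of_ne hc1, Function.update_of_ne hd1, Function.update_of_ne he1,
        Function.update_of_ne h12.symm,
        Finsupp.lmapDomain_apply, Finsupp.mapDomain_single, hswap,
        ← ha, ← hb, ← hc, ← hd, ← he, ← hi, ← hj]
    rw [hLHS, hRHS]
    calc ∑ m : X, ∑ l : X, ∑ k : X,
          (sixj a i m d e j * sixj b c l d m i * sixj b l k e a m) •
            Finsupp.single (Function.update (Function.update f s₁ l) s₂ k) (1:ℝ)
        = ∑ l : X, ∑ m : X, ∑ k : X,
          (sixj a i m d e j * sixj b c l d m i * sixj b l k e a m) •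
            Finsupp.single (Function.update (Function.update f s₁ l) s₂ k) (1:ℝ) :=
          Finset.sum_comm
      _ = ∑ l : X, ∑ k : X, ∑ m : X,
          (sixj a i m d e j * sixj b c l d m i * sixj b l k e a m) •
            Finsupp.single (Function.update (Function.update f s₁ l) s₂ k) (1:ℝ) :=
          Finset.sum_congr rfl fun l _ => Finset.sum_comm
      _ = ∑ l : X, ∑ k : X,
          (sixj b c k j a i * sixj k c l d e j) •
            Finsupp.single (Function.update (Function.update f s₁ l) s₂ k) (1:ℝ) := by
          refine Finset.sum_congr rfl fun l _ => Finset.sum_congr rfl fun k _ => ?_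
          rw [← Finset.sum_smul, hpent a b c d e i j k l]
      _ = ∑ k : X, ∑ l : X,
          (sixj b c k j a i * sixj k c l d e j) •
            Finsupp.single (Function.update (Function.update f s₁ l) s₂ k) (1:ℝ) :=
          Finset.sum_comm
  apply Finsupp.lhom_ext
  intro f y
  have hy : (Finsupp.single f y : (E → X) →₀ ℝ) = y • Finsupp.single f 1 := by
    simp [Finsupp.smul_single]
  rw [hy, map_smul, map_smul, key f]
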